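/- The set of rough inclusion functions on (S, P) with the pointwise product ⊗ and pointwise order ⪯ forms a commutative partially ordered semigroup: ⊗ is closed on RIFs, commutative, associative, and order-preserving in each argument. -/
import Mathlib


def IsRIF {S : Type*} (P : S → S → Prop) (κ : S → S → ℝ) : Prop :=
  (∀ a b, κ a b ∈ Set.Icc (0:ℝ) 1) ∧
  (∀ a b, κ a b = 1 ↔ P a b) ∧
  (∀ a b c, κ b c = 1 → κ a b ≤ κ a c)

lemma mul_eq_one_aux {x y : ℝ} (hx : x ∈ Set.Icc (0:ℝ) 1) (hy : y ∈ Set.Icc (0:ℝ) 1) :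
    x * y = 1 ↔ x = 1 ∧ y = 1 := by
  constructor
  · intro h
    constructor
    · nlinarith [hx.1, hx.2, hy.1, hy.2]
    · nlinarith [hx.1, hx.2, hy.1, hy.2]
  · rintro ⟨h1, h2⟩; rw [h1, h2, one_mul]

theorem stmt_18 {S : Type*} (P : S → S → Prop) :
    (∀ f h : S → S → ℝ, IsRIF P f → IsRIF P h → IsRIF P (fun a b => f a b * h a b)) ∧
    (∀ f h : S → S → ℝ, IsRIF P f → IsRIF P h →
      (fun a b => f a b * h a b) = (fun a b => h a b * f a b)) ∧
    (∀ f h t : S → S → ℝ, IsRIF P f → IsRIF P h → IsRIF P t →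
      (fun a b => f a b * (h a b * t a b)) = (fun a b => (f a b * h a b) * t a b)) ∧
    (∀ f h f' h' : S → S → ℝ, IsRIF P f → IsRIF P h → IsRIF P f' → IsRIF P h' →
      (∀ a b, f a b ≤ h a b) → (∀ a b, f' a b ≤ h' a b) →
      ∀ a b, f a b * f' a b ≤ h a b * h' a b) := by
  refine ⟨?_, ?_, ?_, ?_⟩
  · rintro f h ⟨fI, fP, fM⟩ ⟨hI, hP, hM⟩
    refine ⟨fun a b => ?_, fun a b => ?_, fun a b c hc => ?_⟩
    · exact ⟨mul_nonneg (fI a b).1 (hI a b).1,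
        mul_le_one₀ (fI a b).2 (hI a b).1 (hI a b).2⟩
    · rw [mul_eq_one_aux (fI a b) (hI a b), fP, hP, and_self]
    · rw [mul_eq_one_aux (fI b c) (hI b c)] at hc
      exact mul_le_mul (fM a b c hc.1) (hM a b c hc.2) (hI a b).1
        (fI a c).1
  · intro f h _ _; funext a b; ring
  · intro f h t _ _ _; funext a b; ring
  · rintro f h f' h' _ ⟨hI, _, _⟩ ⟨f'I, _, _⟩ _ hfh hf'h' a b
    exact mul_le_mul (hfh a b) (hf'h' a b) (f'I a b).1 (hI a b).1
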